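/- The topological full group of the two-sided binary full shift {0,1}^ℤ is a subgroup of the Brin–Thompson group 2V: every homeomorphism f of {0,1}^ℤ admitting a continuous cocycle c : {0,1}^ℤ → ℤ with f(x) = σ^{c(x)}(x) belongs to 2V. -/
import Mathlib


/-- The shift map `σ^n`: `(shiftZ n x) i = x (i + n)`; `shiftZ 1` is the left shift `σ`. -/
def shiftZ {A : Type*} (n : ℤ) (x : ℤ → A) : ℤ → A := fun i => x (i + n)

/-- The configuration `x u . v y`: the left-infinite word `x` (with `x 0` immediately to
the left of `u`), then `u` ending at coordinate `-1`, then `v` starting at coordinate `0`,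
then the right-infinite word `y`. -/
def assemble (x : ℕ → Bool) (u v : List Bool) (y : ℕ → Bool) : ℤ → Bool := fun i =>
  if i < 0 then
    if (-1 - i).toNat < u.length then u.getD (u.length - 1 - (-1 - i).toNat) false
    else x ((-1 - i).toNat - u.length)
  else
    if i.toNat < v.length then v.getD i.toNat false
    else y (i.toNat - v.length)

/-- Membership in the Brin–Thompson group `2V`, realized as homeomorphisms of
`{0,1}^ℤ`: there are `n` and a table `c` on pairs of words `(u, v)` with `|u| = n`,
`|v| = n + 1`, such that `f (x u . v y) = x u' . v' y` where `(u', v') = c u v`. -/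
def mem2V (f : (ℤ → Bool) ≃ₜ (ℤ → Bool)) : Prop :=
  ∃ (n : ℕ) (c : List Bool → List Bool → List Bool × List Bool),
    ∀ u v : List Bool, u.length = n → v.length = n + 1 →
      ∀ x y : ℕ → Bool, f (assemble x u v y) = assemble x (c u v).1 (c u v).2 y

lemma shiftZ_add {A : Type*} (a b : ℤ) (z : ℤ → A) :
    shiftZ a (shiftZ b z) = shiftZ (a + b) z := by
  funext i; simp [shiftZ, add_assoc]

lemma step_pos (x y : ℕ → Bool) (u v : List Bool) (b : Bool) :
    shiftZ 1 (assemble x u (b :: v) y) = assemble x (u ++ [b]) v y := by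
  funext i
  simp only [shiftZ, assemble, List.length_append, List.length_cons, List.length_nil]
  rcases lt_trichotomy i (-1) with hi | hi | hi
  · have h1 : i + 1 < 0 := by omega
    have h2 : i < 0 := by omega
    have e1 : (-1 - (i + 1)).toNat = (-1 - i).toNat - 1 := by omega
    have e2 : (-1 - i).toNat = ((-1 - i).toNat - 1) + 1 := by omega
    rw [if_pos h1, if_pos h2, e1, e2]
    set k := (-1 - i).toNat - 1 with hk
    simp only [Nat.add_sub_cancel]
    by_cases hku : k < u.length
    · rw [if_pos hku, if_pos (by omega), List.getD_append _ _ _ _ (by omega)]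
      congr 1; omega
    · rw [if_neg hku, if_neg (by omega)]
      congr 1; omega
  · subst hi
    have h1 : ¬ ((-1 : ℤ) + 1 < 0) := by omega
    have h2 : ((-1 : ℤ)) < 0 := by omega
    rw [if_neg h1, if_pos h2]
    have e1 : ((-1 : ℤ) + 1).toNat = 0 := by omega
    have e2 : (-1 - (-1 : ℤ)).toNat = 0 := by omega
    rw [e1, e2, if_pos (by omega), if_pos (by omega)]
    rw [List.getD_append_right _ _ _ _ (by omega)]
    simp
  · have h1 : ¬ i + 1 < 0 := by omega
    have h2 : ¬ i < 0 := by omega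
    have e1 : (i + 1).toNat = i.toNat + 1 := by omega
    rw [if_neg h1, if_neg h2, e1]
    by_cases hv : i.toNat < v.length
    · rw [if_pos (by omega), if_pos hv]
      simp [List.getD_cons_succ]
    · rw [if_neg (by omega), if_neg hv]
      congr 1; omega

lemma shiftZ_zero {A : Type*} (z : ℤ → A) : shiftZ 0 z = z := by
  funext i; simp [shiftZ]

lemma step_neg (x y : ℕ → Bool) (u v : List Bool) (b : Bool) :
    shiftZ (-1) (assemble x (u ++ [b]) v y) = assemble x u (b :: v) y := by
  have := congrArg (shiftZ (-1)) (step_pos x y u v b)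
  rw [shiftZ_add] at this
  norm_num at this
  rw [← this, shiftZ_zero]

lemma shift_pos (k : ℕ) : ∀ (u v : List Bool) (x y : ℕ → Bool), k ≤ v.length →
    shiftZ k (assemble x u v y) = assemble x (u ++ v.take k) (v.drop k) y := by
  induction k with
  | zero => intro u v x y _; rw [Nat.cast_zero, shiftZ_zero]; simp
  | succ k ih =>
    intro u v x y hk
    match v with
    | [] => simp at hk
    | b :: v =>
      have h1 : ((k : ℤ) + 1) = (k : ℤ) + 1 := rfl
      have : shiftZ ((k : ℕ) + 1 : ℕ) (assemble x u (b :: v) y)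
          = shiftZ k (shiftZ 1 (assemble x u (b :: v) y)) := by
        rw [shiftZ_add]; norm_num
      rw [this, step_pos, ih (u ++ [b]) v x y (by simpa using hk)]
      simp

lemma shift_neg (k : ℕ) : ∀ (u v : List Bool) (x y : ℕ → Bool), k ≤ u.length →
    shiftZ (-(k : ℤ)) (assemble x u v y)
      = assemble x (u.take (u.length - k)) (u.drop (u.length - k) ++ v) y := by
  induction k with
  | zero => intro u v x y _; rw [Nat.cast_zero, neg_zero, shiftZ_zero]; simp
  | succ k ih =>
    intro u v x y hk
    have hlt : u.length - (k + 1) < u.length := by omega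
    have : shiftZ (-((k : ℤ) + 1)) (assemble x u v y)
        = shiftZ (-1) (shiftZ (-(k : ℤ)) (assemble x u v y)) := by
      rw [shiftZ_add]; ring_nf
    push_cast
    rw [this, ih u v x y (by omega)]
    have htk : u.take (u.length - k) = u.take (u.length - (k + 1)) ++ [u[u.length - (k+1)]] := by
      have : u.length - k = (u.length - (k + 1)) + 1 := by omega
      rw [this, List.take_succ]
      simp [List.getElem?_eq_getElem hlt]
    have e : u.length - (k + 1) + 1 = u.length - k := by omega
    have hdk : u.drop (u.length - (k + 1)) = u[u.length - (k+1)] :: u.drop (u.length - k) := by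
      rw [List.drop_eq_getElem_cons hlt, e]
    rw [htk, step_neg, hdk, List.cons_append]

lemma exists_bound (g : (ℤ → Bool) → ℤ) (hg : Continuous g) :
    ∃ n : ℕ, (∀ x y : ℤ → Bool, (∀ i : ℤ, i.natAbs ≤ n → x i = y i) → g x = g y) ∧
      ∀ x, (g x).natAbs ≤ n := by
  have H : ∀ x : ℤ → Bool, ∃ I : Finset ℤ, ∀ y, (∀ i ∈ I, y i = x i) → g y = g x := by
    intro x
    have hopen : IsOpen (g ⁻¹' {g x}) := (isOpen_discrete _).preimage hg
    obtain ⟨I, U, hIU, hsub⟩ := (isOpen_pi_iff.mp hopen) x rfl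
    exact ⟨I, fun y hy => hsub (fun i hi => (hy i hi) ▸ (hIU i hi).2)⟩
  choose I hI using H
  have hCopen : ∀ x : ℤ → Bool, IsOpen {y : ℤ → Bool | ∀ i ∈ I x, y i = x i} := by
    intro x
    have : {y : ℤ → Bool | ∀ i ∈ I x, y i = x i} = Set.pi (I x) (fun i => {x i}) := by
      ext y; simp [Set.mem_pi]
    rw [this]
    exact isOpen_set_pi (I x).finite_toSet (fun i _ => isOpen_discrete _)
  obtain ⟨t, ht⟩ := IsCompact.elim_finite_subcover (isCompact_univ (X := ℤ → Bool))
    (fun x => {y : ℤ → Bool | ∀ i ∈ I x, y i = x i}) hCopen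
    (fun x _ => Set.mem_iUnion.mpr ⟨x, fun i _ => rfl⟩)
  refine ⟨t.sup (fun x => max ((I x).sup Int.natAbs) (g x).natAbs), ?_, ?_⟩
  · intro x y hxy
    obtain ⟨z, hz, hxz⟩ := Set.mem_iUnion₂.mp (ht (Set.mem_univ x))
    have hyz : ∀ i ∈ I z, y i = z i := by
      intro i hi
      have hb : i.natAbs ≤ t.sup (fun x => max ((I x).sup Int.natAbs) (g x).natAbs) :=
        le_trans (le_trans (Finset.le_sup hi) (le_max_left _ _))
          (Finset.le_sup (f := fun x => max ((I x).sup Int.natAbs) (g x).natAbs) hz)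
      rw [← hxy i hb]; exact hxz i hi
    rw [hI z y hyz, hI z x hxz]
  · intro x
    obtain ⟨z, hz, hxz⟩ := Set.mem_iUnion₂.mp (ht (Set.mem_univ x))
    rw [hI z x hxz]
    exact le_trans (le_max_right _ _)
      (Finset.le_sup (f := fun x => max ((I x).sup Int.natAbs) (g x).natAbs) hz)

lemma assemble_agree {n : ℕ} (u v : List Bool) (hu : u.length = n) (hv : v.length = n + 1)
    (x y x' y' : ℕ → Bool) (i : ℤ) (hi : i.natAbs ≤ n) :
    assemble x u v y i = assemble x' u v y' i := by
  simp only [assemble]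
  by_cases h : i < 0
  · rw [if_pos h, if_pos h, if_pos (by omega), if_pos (by omega)]
  · rw [if_neg h, if_neg h, if_pos (by omega), if_pos (by omega)]

def tableFun (cc : (ℤ → Bool) → ℤ) (u v : List Bool) : List Bool × List Bool :=
  let m := cc (assemble (fun _ => false) u v (fun _ => false))
  if 0 ≤ m then (u ++ v.take m.toNat, v.drop m.toNat)
  else (u.take (u.length - (-m).toNat), u.drop (u.length - (-m).toNat) ++ v)


/-- Every element of the topological full group of the binary full shift `{0,1}^ℤ`
belongs to the Brin–Thompson group `2V`. -/
theorem tfg_le_2V (f : (ℤ → Bool) ≃ₜ (ℤ → Bool))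
    (hf : ∃ c : (ℤ → Bool) → ℤ, Continuous c ∧ ∀ x, f x = shiftZ (c x) x) :
    mem2V f := by
  obtain ⟨cc, hcont, hfc⟩ := hf
  obtain ⟨n, hloc, hbd⟩ := exists_bound cc hcont
  refine ⟨n, tableFun cc, ?_⟩
  intro u v hu hv x y
  set m := cc (assemble (fun _ => false) u v (fun _ => false)) with hmdef
  have hm : cc (assemble x u v y) = m :=
    hloc _ _ (fun i hi => assemble_agree u v hu hv x y _ _ i hi)
  have hbm : m.natAbs ≤ n := hmdef ▸ hbd _
  rw [hfc, hm]
  rcases le_or_gt 0 m with hm0 | hm0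
  · have e : m = ((m.toNat : ℕ) : ℤ) := (Int.toNat_of_nonneg hm0).symm
    rw [e, shift_pos m.toNat u v x y (by omega)]
    simp only [tableFun, ← hmdef, if_pos hm0]
  · have e : m = -(((-m).toNat : ℕ) : ℤ) := by omega
    rw [e, shift_neg (-m).toNat u v x y (by omega)]
    simp only [tableFun, ← hmdef, if_neg (not_le.mpr hm0)]
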